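/- Let n, r be positive integers and T ⊆ ℝ^{n×n} be the tangent space of a rank-r matrix L ∈ ℝ^{n×n} with compact SVD L = UΣVᵀ. Let R, Δ ∈ ℝ^{n×n} and ρ ≥ 0 satisfy ‖P_T(R)‖_F ≤ ρ, ‖P_{T⊥}(R)‖ ≤ 1/2, and ‖P_{T⊥}(Δ)‖_* ≤ 2ρ·‖P_T(Δ)‖_F. Then for every W ∈ T⊥ with ‖W‖ ≤ 1, one has |⟨Δ, R − W⟩| ≤ 4ρ·‖P_T(Δ)‖_F. -/

import Mathlib

open MeasureTheory ProbabilityTheory Matrix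
open scoped ENNReal

noncomputable section

/-- Frobenius norm of a real matrix. -/
def frobNorm {n m : ℕ} (A : Matrix (Fin n) (Fin m) ℝ) : ℝ :=
  Real.sqrt (∑ i, ∑ j, (A i j) ^ 2)

/-- Entrywise sup norm (largest absolute value of an entry). -/
def infNorm {n m : ℕ} (A : Matrix (Fin n) (Fin m) ℝ) : ℝ :=
  ⨆ i, ⨆ j, |A i j|

/-- Largest Euclidean norm of a row. -/
def row2InfNorm {n m : ℕ} (A : Matrix (Fin n) (Fin m) ℝ) : ℝ :=
  ⨆ i, Real.sqrt (∑ j, (A i j) ^ 2)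

/-- The (unsorted) singular values of a real matrix: square roots of the
eigenvalues of `Aᵀ * A`. -/
def singVal {n m : ℕ} (A : Matrix (Fin n) (Fin m) ℝ) : Fin m → ℝ :=
  fun j => Real.sqrt ((Matrix.isHermitian_conjTranspose_mul_self A).eigenvalues j)

/-- Spectral norm: the largest singular value. -/
def specNorm {n m : ℕ} (A : Matrix (Fin n) (Fin m) ℝ) : ℝ :=
  ⨆ j, singVal A j

/-- Nuclear norm: the sum of the singular values. -/
def nucNorm {n m : ℕ} (A : Matrix (Fin n) (Fin m) ℝ) : ℝ :=
  ∑ j, singVal A j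

open Classical in
/-- Projection onto the observed entries. -/
def POmega {n : ℕ} (S : Set (Fin n × Fin n)) (A : Matrix (Fin n) (Fin n) ℝ) :
    Matrix (Fin n) (Fin n) ℝ :=
  fun i j => if (i, j) ∈ S then A i j else 0

/-- Trace inner product of two real matrices. -/
def minner {n m : ℕ} (A B : Matrix (Fin n) (Fin m) ℝ) : ℝ :=
  ∑ i, ∑ j, A i j * B i j

/-- The square-root matrix completion objective. -/
def sqF {n : ℕ} (S : Set (Fin n × Fin n)) (M : Matrix (Fin n) (Fin n) ℝ) (lam : ℝ)
    (L : Matrix (Fin n) (Fin n) ℝ) : ℝ :=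
  frobNorm (POmega S (L - M)) + lam * nucNorm L

/-- `X`-gradient of the nonconvex objective `g`. -/
def gradX {n r : ℕ} (S : Set (Fin n × Fin n)) (M : Matrix (Fin n) (Fin n) ℝ) (lam : ℝ)
    (X Y : Matrix (Fin n) (Fin r) ℝ) : Matrix (Fin n) (Fin r) ℝ :=
  (frobNorm (POmega S (X * Yᵀ - M)))⁻¹ • (POmega S (X * Yᵀ - M) * Y) + lam • X

/-- `Y`-gradient of the nonconvex objective `g`. -/
def gradY {n r : ℕ} (S : Set (Fin n × Fin n)) (M : Matrix (Fin n) (Fin n) ℝ) (lam : ℝ)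
    (X Y : Matrix (Fin n) (Fin r) ℝ) : Matrix (Fin n) (Fin r) ℝ :=
  (frobNorm (POmega S (X * Yᵀ - M)))⁻¹ • ((POmega S (X * Yᵀ - M))ᵀ * X) + lam • Y

/-- Frobenius norm of the full gradient of `g`. -/
def gradNorm {n r : ℕ} (S : Set (Fin n × Fin n)) (M : Matrix (Fin n) (Fin n) ℝ) (lam : ℝ)
    (X Y : Matrix (Fin n) (Fin r) ℝ) : ℝ :=
  Real.sqrt ((frobNorm (gradX S M lam X Y)) ^ 2 + (frobNorm (gradY S M lam X Y)) ^ 2)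

/-- Orthogonal projection onto the tangent space `T = {U Aᵀ + B Vᵀ}` (for `U, V` with
orthonormal columns), with respect to the trace inner product. -/
def projT {n r : ℕ} (U V : Matrix (Fin n) (Fin r) ℝ) (A : Matrix (Fin n) (Fin n) ℝ) :
    Matrix (Fin n) (Fin n) ℝ :=
  U * Uᵀ * A + A * (V * Vᵀ) - U * Uᵀ * A * (V * Vᵀ)

/-- Orthogonal projection onto the orthogonal complement of the tangent space. -/
def projTperp {n r : ℕ} (U V : Matrix (Fin n) (Fin r) ℝ) (A : Matrix (Fin n) (Fin n) ℝ) :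
    Matrix (Fin n) (Fin n) ℝ :=
  A - projT U V A

open Classical in
/-- Indicator (as a real random variable) that an entry is observed. -/
def obsInd {n : ℕ} {Ω₀ : Type} (Obs : Ω₀ → Set (Fin n × Fin n)) (k : Fin n × Fin n)
    (ω : Ω₀) : ℝ :=
  if k ∈ Obs ω then 1 else 0

end

/-!
Since `P_T` is a self-adjoint idempotent (by orthonormality of `U` and `V`) and `P_T W = 0`,
`⟨Δ, R - W⟩ = ⟨P_T Δ, P_T R⟩ + ⟨P_{T⊥} Δ, P_{T⊥} R⟩ - ⟨P_{T⊥} Δ, W⟩`.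
Cauchy–Schwarz bounds the first term by `ρ ‖P_T Δ‖_F`, and trace duality
`|⟨A, B⟩| ≤ ‖A‖_* ‖B‖` bounds the other two by `(1/2 + 1) ‖P_{T⊥} Δ‖_* ≤ 3ρ ‖P_T Δ‖_F`.
Trace duality comes from evaluating `tr (Aᵀ B)` in an orthonormal eigenbasis `(w_j)` of `Aᵀ A`:
there `‖A w_j‖` is the `j`-th singular value of `A`, while `‖B w_j‖ ≤ ‖B‖`.
-/

lemma Real.abs_sum_mul_le_sqrt_mul_sqrt {ι : Type*} (s : Finset ι) (f g : ι → ℝ) :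
    |∑ i ∈ s, f i * g i| ≤ √(∑ i ∈ s, f i ^ 2) * √(∑ i ∈ s, g i ^ 2) := by
  rw [← Real.sqrt_mul (Finset.sum_nonneg fun i _ => sq_nonneg (f i))]
  exact Real.abs_le_sqrt (Finset.sum_mul_sq_le_sq_mul_sq s f g)

section InnerProduct

variable {n m : ℕ}

lemma minner_eq_trace (A B : Matrix (Fin n) (Fin m) ℝ) : minner A B = trace (Aᵀ * B) := by
  simp only [minner, trace, diag, mul_apply, transpose_apply]
  exact Finset.sum_comm

lemma minner_comm (A B : Matrix (Fin n) (Fin m) ℝ) : minner A B = minner B A := by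
  simp only [minner, mul_comm]

lemma minner_add_left (A B C : Matrix (Fin n) (Fin m) ℝ) :
    minner (A + B) C = minner A C + minner B C := by
  simp only [minner, Matrix.add_apply, add_mul, Finset.sum_add_distrib]

lemma minner_sub_left (A B C : Matrix (Fin n) (Fin m) ℝ) :
    minner (A - B) C = minner A C - minner B C := by
  simp only [minner, Matrix.sub_apply, sub_mul, Finset.sum_sub_distrib]

lemma minner_add_right (A B C : Matrix (Fin n) (Fin m) ℝ) :
    minner A (B + C) = minner A B + minner A C := by
  rw [minner_comm, minner_add_left, minner_comm B, minner_comm C]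

lemma minner_sub_right (A B C : Matrix (Fin n) (Fin m) ℝ) :
    minner A (B - C) = minner A B - minner A C := by
  rw [minner_comm, minner_sub_left, minner_comm B, minner_comm C]

lemma minner_mul_left (P : Matrix (Fin n) (Fin n) ℝ) (A B : Matrix (Fin n) (Fin m) ℝ) :
    minner (P * A) B = minner A (Pᵀ * B) := by
  rw [minner_eq_trace, minner_eq_trace, transpose_mul, Matrix.mul_assoc]

lemma minner_mul_right (Q : Matrix (Fin m) (Fin m) ℝ) (A B : Matrix (Fin n) (Fin m) ℝ) :
    minner (A * Q) B = minner A (B * Qᵀ) := by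
  rw [minner_eq_trace, minner_eq_trace, transpose_mul, Matrix.mul_assoc, trace_mul_comm,
    Matrix.mul_assoc]

lemma frobNorm_nonneg (A : Matrix (Fin n) (Fin m) ℝ) : 0 ≤ frobNorm A :=
  Real.sqrt_nonneg _

lemma abs_minner_le_frobNorm_mul_frobNorm (A B : Matrix (Fin n) (Fin m) ℝ) :
    |minner A B| ≤ frobNorm A * frobNorm B := by
  have h := Real.abs_sum_mul_le_sqrt_mul_sqrt Finset.univ (fun p : Fin n × Fin m => A p.1 p.2)
    (fun p => B p.1 p.2)
  simpa only [minner, frobNorm, Fintype.sum_prod_type] using h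

end InnerProduct

section TangentSpace

variable {n r : ℕ} (U V : Matrix (Fin n) (Fin r) ℝ)

lemma projT_sub (A B : Matrix (Fin n) (Fin n) ℝ) :
    projT U V (A - B) = projT U V A - projT U V B := by
  simp only [projT, Matrix.mul_sub, Matrix.sub_mul]
  abel

lemma minner_projT_left (A B : Matrix (Fin n) (Fin n) ℝ) :
    minner (projT U V A) B = minner A (projT U V B) := by
  have hUU : (U * Uᵀ)ᵀ = U * Uᵀ := by rw [transpose_mul, transpose_transpose]
  have hVV : (V * Vᵀ)ᵀ = V * Vᵀ := by rw [transpose_mul, transpose_transpose]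
  simp only [projT, minner_add_left, minner_sub_left, minner_add_right, minner_sub_right,
    minner_mul_left (U * Uᵀ), minner_mul_right (V * Vᵀ), hUU, hVV]
  simp only [Matrix.mul_assoc]

variable {U V}

lemma projT_projT (hU : Uᵀ * U = 1) (hV : Vᵀ * V = 1) (A : Matrix (Fin n) (Fin n) ℝ) :
    projT U V (projT U V A) = projT U V A := by
  have hUU (X : Matrix (Fin r) (Fin n) ℝ) : Uᵀ * (U * X) = X := by
    rw [← Matrix.mul_assoc, hU, Matrix.one_mul]
  have hVV (X : Matrix (Fin r) (Fin n) ℝ) : Vᵀ * (V * X) = X := by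
    rw [← Matrix.mul_assoc, hV, Matrix.one_mul]
  simp only [projT, Matrix.mul_add, Matrix.add_mul, Matrix.mul_sub, Matrix.sub_mul,
    Matrix.mul_assoc, hUU, hVV]
  abel

lemma minner_projT_projTperp (hU : Uᵀ * U = 1) (hV : Vᵀ * V = 1)
    (A B : Matrix (Fin n) (Fin n) ℝ) :
    minner (projT U V A) (projTperp U V B) = 0 := by
  rw [projTperp, minner_sub_right, minner_projT_left, minner_projT_left, projT_projT hU hV,
    sub_self]

lemma minner_eq_minner_projT_add_minner_projTperp (hU : Uᵀ * U = 1) (hV : Vᵀ * V = 1)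
    (A B : Matrix (Fin n) (Fin n) ℝ) :
    minner A B = minner (projT U V A) (projT U V B) +
      minner (projTperp U V A) (projTperp U V B) := by
  conv_lhs => rw [← add_sub_cancel (projT U V A) A, ← add_sub_cancel (projT U V B) B]
  rw [← projTperp, ← projTperp, minner_add_left, minner_add_right, minner_add_right,
    minner_projT_projTperp hU hV, minner_comm (projTperp U V A), minner_projT_projTperp hU hV]
  ring

end TangentSpace

lemma dotProduct_mulVec_le_of_eq_mul_diagonal_mul {ι : Type*} [Fintype ι] [DecidableEq ι]
    {W : Matrix ι ι ℝ} (hW : W * Wᵀ = 1) {d : ι → ℝ} {c : ℝ} (hd : ∀ j, d j ≤ c)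
    (x : ι → ℝ) : x ⬝ᵥ (W * diagonal d * Wᵀ) *ᵥ x ≤ c * (x ⬝ᵥ x) := by
  set y := Wᵀ *ᵥ x
  have hquad : x ⬝ᵥ (W * diagonal d * Wᵀ) *ᵥ x = y ⬝ᵥ diagonal d *ᵥ y := by
    rw [← mulVec_mulVec, ← mulVec_mulVec, dotProduct_mulVec, ← mulVec_transpose]
  have hnorm : y ⬝ᵥ y = x ⬝ᵥ x := by
    rw [dotProduct_mulVec, vecMul_transpose, mulVec_mulVec, hW, one_mulVec]
  rw [hquad, ← hnorm]
  simp only [dotProduct, mulVec_diagonal, Finset.mul_sum]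
  exact Finset.sum_le_sum fun j _ => by nlinarith [hd j, mul_self_nonneg (y j)]

lemma sum_sq_apply_eq_transpose_mul_self_apply {ι κ : Type*} [Fintype ι]
    (M : Matrix ι κ ℝ) (j : κ) : ∑ i, M i j ^ 2 = (Mᵀ * M) j j := by
  simp only [mul_apply, transpose_apply, sq]

section SingularValues

variable {n m : ℕ}

lemma singVal_nonneg (A : Matrix (Fin n) (Fin m) ℝ) (j : Fin m) : 0 ≤ singVal A j :=
  Real.sqrt_nonneg _

lemma singVal_le_specNorm (A : Matrix (Fin n) (Fin m) ℝ) (j : Fin m) :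
    singVal A j ≤ specNorm A :=
  le_ciSup (Set.finite_range _).bddAbove j

lemma specNorm_nonneg (A : Matrix (Fin n) (Fin m) ℝ) : 0 ≤ specNorm A :=
  Real.iSup_nonneg (singVal_nonneg A)

lemma nucNorm_nonneg (A : Matrix (Fin n) (Fin m) ℝ) : 0 ≤ nucNorm A :=
  Finset.sum_nonneg fun j _ => singVal_nonneg A j

lemma singVal_sq (A : Matrix (Fin n) (Fin m) ℝ) (j : Fin m) :
    singVal A j ^ 2 = (isHermitian_conjTranspose_mul_self A).eigenvalues j :=
  Real.sq_sqrt ((posSemidef_conjTranspose_mul_self A).eigenvalues_nonneg j)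

lemma exists_orthogonal_transpose_mul_self_eq (A : Matrix (Fin n) (Fin m) ℝ) :
    ∃ W : Matrix (Fin m) (Fin m) ℝ, Wᵀ * W = 1 ∧ W * Wᵀ = 1 ∧
      Aᵀ * A = W * diagonal (fun j => singVal A j ^ 2) * Wᵀ := by
  set hA := isHermitian_conjTranspose_mul_self A
  refine ⟨hA.eigenvectorUnitary, ?_, ?_, ?_⟩
  · simpa only [star_eq_conjTranspose, conjTranspose_eq_transpose_of_trivial] using
      Unitary.coe_star_mul_self hA.eigenvectorUnitary
  · simpa only [Unitary.coe_star, star_eq_conjTranspose, conjTranspose_eq_transpose_of_trivial]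
      using Unitary.coe_mul_star_self hA.eigenvectorUnitary
  · rw [funext (singVal_sq A)]
    simpa [star_eq_conjTranspose, conjTranspose_eq_transpose_of_trivial] using hA.spectral_theorem

lemma sum_sq_mulVec_le_specNorm_sq (B : Matrix (Fin n) (Fin m) ℝ) (x : Fin m → ℝ) :
    ∑ i, (B *ᵥ x) i ^ 2 ≤ specNorm B ^ 2 * ∑ j, x j ^ 2 := by
  obtain ⟨W, -, hW, hBB⟩ := exists_orthogonal_transpose_mul_self_eq B
  have h := dotProduct_mulVec_le_of_eq_mul_diagonal_mul hW
    (fun j => pow_le_pow_left₀ (singVal_nonneg B j) (singVal_le_specNorm B j) 2) x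
  rw [← hBB, ← mulVec_mulVec, dotProduct_mulVec, vecMul_transpose] at h
  simpa only [dotProduct, sq] using h

theorem abs_minner_le_nucNorm_mul_specNorm (A B : Matrix (Fin n) (Fin m) ℝ) :
    |minner A B| ≤ nucNorm A * specNorm B := by
  obtain ⟨W, hWtW, hWWt, hAA⟩ := exists_orthogonal_transpose_mul_self_eq A
  have hAcol (j : Fin m) : ∑ i, (A * W) i j ^ 2 = singVal A j ^ 2 := by
    have hAW : (A * W)ᵀ * (A * W) = diagonal (fun j => singVal A j ^ 2) := by
      rw [transpose_mul, Matrix.mul_assoc, ← Matrix.mul_assoc Aᵀ, hAA]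
      simp only [Matrix.mul_assoc, hWtW, Matrix.mul_one]
      simp only [← Matrix.mul_assoc, hWtW, Matrix.one_mul]
    rw [sum_sq_apply_eq_transpose_mul_self_apply, hAW, diagonal_apply_eq]
  have hBcol (j : Fin m) : √(∑ i, (B * W) i j ^ 2) ≤ specNorm B := by
    have hWcol : ∑ k, W k j ^ 2 = 1 := by
      rw [sum_sq_apply_eq_transpose_mul_self_apply, hWtW, one_apply_eq]
    rw [Real.sqrt_le_left (specNorm_nonneg B)]
    have h := sum_sq_mulVec_le_specNorm_sq B (fun k => W k j)
    rw [hWcol, mul_one] at h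
    exact h
  have hrot : minner A B = minner (A * W) (B * W) := by
    rw [minner_mul_right, Matrix.mul_assoc, hWWt, Matrix.mul_one]
  calc |minner A B| = |∑ j, ∑ i, (A * W) i j * (B * W) i j| := by
        rw [hrot, minner, Finset.sum_comm]
    _ ≤ ∑ j, |∑ i, (A * W) i j * (B * W) i j| := Finset.abs_sum_le_sum_abs _ _
    _ ≤ ∑ j, singVal A j * specNorm B := by
        gcongr with j
        refine (Real.abs_sum_mul_le_sqrt_mul_sqrt _ _ _).trans ?_
        rw [hAcol, Real.sqrt_sq (singVal_nonneg A j)]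
        exact mul_le_mul_of_nonneg_left (hBcol j) (singVal_nonneg A j)
    _ = nucNorm A * specNorm B := (Finset.sum_mul ..).symm

end SingularValues

theorem sqrtMC_inner_product_bound_general (n r : ℕ)
    (U V : Matrix (Fin n) (Fin r) ℝ) (R Δ : Matrix (Fin n) (Fin n) ℝ)
    (ρ : ℝ)
    (hU : Uᵀ * U = 1) (hV : Vᵀ * V = 1)
    (hRT : frobNorm (projT U V R) ≤ ρ)
    (hRperp : specNorm (projTperp U V R) ≤ 1 / 2)
    (hΔ : nucNorm (projTperp U V Δ) ≤ 2 * ρ * frobNorm (projT U V Δ)) :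
    ∀ W : Matrix (Fin n) (Fin n) ℝ, projT U V W = 0 → specNorm W ≤ 1 →
      |minner Δ (R - W)| ≤ 4 * ρ * frobNorm (projT U V Δ) := by
  intro W hW hWnorm
  have hPW : projT U V (R - W) = projT U V R := by rw [projT_sub, hW, sub_zero]
  have hQW : projTperp U V (R - W) = projTperp U V R - W := by
    rw [projTperp, hPW, projTperp]
    abel
  have hF := frobNorm_nonneg (projT U V Δ)
  have hN := nucNorm_nonneg (projTperp U V Δ)
  have hboundT := (abs_minner_le_frobNorm_mul_frobNorm (projT U V Δ) (projT U V R)).trans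
    (mul_le_mul_of_nonneg_left hRT hF)
  have hboundR := (abs_minner_le_nucNorm_mul_specNorm (projTperp U V Δ) (projTperp U V R)).trans
    (mul_le_mul_of_nonneg_left hRperp hN)
  have hboundW := (abs_minner_le_nucNorm_mul_specNorm (projTperp U V Δ) W).trans
    (mul_le_mul_of_nonneg_left hWnorm hN)
  rw [minner_eq_minner_projT_add_minner_projTperp hU hV, hPW, hQW, minner_sub_right]
  calc _ ≤ |minner (projT U V Δ) (projT U V R)| +
        (|minner (projTperp U V Δ) (projTperp U V R)| + |minner (projTperp U V Δ) W|) :=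
        (abs_add_le _ _).trans (add_le_add_right (abs_sub _ _) _)
    _ ≤ 4 * ρ * frobNorm (projT U V Δ) := by linarith

/-- Inner-product bound: if `R` has small components in `T` and `T⊥`,
and `Δ` lies mostly in `T`, then `|⟨Δ, R − W⟩| ≤ 4ρ‖P_T(Δ)‖_F` for every `W ∈ T⊥`
with `‖W‖ ≤ 1`. -/
theorem sqrtMC_inner_product_bound (n r : ℕ) (hn : 0 < n) (hr : 0 < r)
    (U V : Matrix (Fin n) (Fin r) ℝ) (Sg : Fin r → ℝ) (L R Δ : Matrix (Fin n) (Fin n) ℝ)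
    (ρ : ℝ)
    -- compact SVD of `L` (in particular it has rank `r`), defining the tangent space `T`
    (hSVD : L = U * Matrix.diagonal Sg * Vᵀ)
    (hU : Uᵀ * U = 1) (hV : Vᵀ * V = 1) (hSg : ∀ i, 0 < Sg i)
    (hρ : 0 ≤ ρ)
    (hRT : frobNorm (projT U V R) ≤ ρ)
    (hRperp : specNorm (projTperp U V R) ≤ 1 / 2)
    (hΔ : nucNorm (projTperp U V Δ) ≤ 2 * ρ * frobNorm (projT U V Δ)) :
    ∀ W : Matrix (Fin n) (Fin n) ℝ, projT U V W = 0 → specNorm W ≤ 1 →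
      |minner Δ (R - W)| ≤ 4 * ρ * frobNorm (projT U V Δ) :=
  sqrtMC_inner_product_bound_general n r U V R Δ ρ hU hV hRT hRperp hΔ
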